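/- Every connected {K₃, false-twin}-free graph on n ≥ 4 vertices has at least ⌈n/2⌉ bicliques. -/

import Mathlib

/-!
Choose for every vertex `v` a biclique containing `v` and all its neighbours; such a biclique
exists because, in a triangle-free graph without isolated vertices, the closed neighbourhood of
`v` is a star `K_{1,deg v}`. If a biclique with parts `X ∪ Y` contains the closed neighbourhood
of a vertex `u ∈ X`, then the neighbourhood of `u` is exactly `Y`. Hence, without false twins,
each biclique is chosen by at most one vertex of each part, so there are at least `n / 2` of them.
-/

/-- A set of vertices inducing a complete bipartite subgraph (both sides nonempty). -/
def IsCompleteBipartiteSet {V : Type*} (G : SimpleGraph V) (B : Set V) : Prop :=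
  ∃ X Y : Set V, X.Nonempty ∧ Y.Nonempty ∧ Disjoint X Y ∧ B = X ∪ Y ∧
    (∀ x ∈ X, ∀ y ∈ Y, G.Adj x y) ∧
    (∀ x ∈ X, ∀ x' ∈ X, ¬ G.Adj x x') ∧
    (∀ y ∈ Y, ∀ y' ∈ Y, ¬ G.Adj y y')

/-- A biclique: a maximal set of vertices inducing a complete bipartite subgraph. -/
def IsBiclique {V : Type*} (G : SimpleGraph V) (B : Set V) : Prop :=
  IsCompleteBipartiteSet G B ∧
    ∀ B' : Set V, IsCompleteBipartiteSet G B' → B ⊆ B' → B' = B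

/-- A vertex set that is a star: a center `c` adjacent to all other vertices of the set,
which are nonempty and pairwise non-adjacent (shape `K_{1,r}`, `r ≥ 1`). -/
def IsStarSet {V : Type*} (G : SimpleGraph V) (B : Set V) : Prop :=
  ∃ c ∈ B, (B \ {c}).Nonempty ∧ (∀ w ∈ B, w ≠ c → G.Adj c w) ∧
    (∀ w ∈ B, ∀ z ∈ B, w ≠ c → z ≠ c → ¬ G.Adj w z)

/-- A graph is false-twin-free if no two distinct vertices have equal open neighborhoods. -/
def FalseTwinFree {V : Type*} (G : SimpleGraph V) : Prop :=
  ∀ u v : V, G.neighborSet u = G.neighborSet v → u = v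

theorem Nat.card_le_mul_ncard_of_mapsTo {α β : Type*} [Finite α] {f : α → β} {s : Set β}
    (hf : ∀ a, f a ∈ s) (n : ℕ) (hn : ∀ b ∈ s, (f ⁻¹' {b}).ncard ≤ n)
    (hs : s.Finite := by toFinite_tac) : Nat.card α ≤ n * s.ncard := by
  classical
  have := Fintype.ofFinite α
  rw [Nat.card_eq_fintype_card, ← Finset.card_univ, Set.ncard_eq_toFinset_card s hs]
  refine Finset.card_le_mul_card_image_of_maps_to (fun a _ => hs.mem_toFinset.mpr (hf a)) n
    fun b hb => ?_
  simpa [Set.ncard_eq_toFinset_card'] using hn b (hs.mem_toFinset.mp hb)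

theorem IsCompleteBipartiteSet.exists_isBiclique_superset {V : Type*} [Finite V]
    {G : SimpleGraph V} {B : Set V} (hB : IsCompleteBipartiteSet G B) : ∃ C, IsBiclique G C ∧ B ⊆ C := by
  obtain ⟨C, hBC, hC⟩ := Finite.exists_le_maximal hB
  exact ⟨C, ⟨hC.1, fun C' hC' hCC' => (hC.2 hC' hCC').antisymm hCC'⟩, hBC⟩

namespace SimpleGraph

variable {V : Type*} {G : SimpleGraph V}

theorem isCompleteBipartiteSet_insert_neighborSet (hK3 : G.CliqueFree 3) {v : V}
    (hv : (G.neighborSet v).Nonempty) :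
    IsCompleteBipartiteSet G (insert v (G.neighborSet v)) := by
  refine ⟨{v}, G.neighborSet v, Set.singleton_nonempty v, hv, ?_, rfl, ?_, ?_, ?_⟩
  · exact Set.disjoint_singleton_left.mpr (G.notMem_neighborSet_self)
  · rintro x rfl y hy
    exact hy
  · rintro x rfl x' rfl
    exact G.irrefl
  · classical
    intro y hy y' hy' hyy'
    exact hK3 {v, y, y'} (is3Clique_triple_iff.mpr ⟨hy, hy', hyy'⟩)

theorem neighborSet_eq_of_neighborSet_subset_union {X Y : Set V}
    (hXY : ∀ x ∈ X, ∀ y ∈ Y, G.Adj x y) (hX : ∀ x ∈ X, ∀ x' ∈ X, ¬ G.Adj x x')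
    {u : V} (hu : u ∈ X) (hN : G.neighborSet u ⊆ X ∪ Y) : G.neighborSet u = Y := by
  refine Set.Subset.antisymm (fun w hw => ?_) (hXY u hu)
  exact (hN hw).resolve_left fun hwX => hX u hu w hwX hw

theorem ncard_insert_neighborSet_subset_le_two (htf : FalseTwinFree G) {B : Set V}
    (hB : IsCompleteBipartiteSet G B) :
    {u | insert u (G.neighborSet u) ⊆ B}.ncard ≤ 2 := by
  obtain ⟨X, Y, -, -, -, rfl, hXY, hX, hY⟩ := hB
  have hYX : ∀ y ∈ Y, ∀ x ∈ X, G.Adj y x := fun y hy x hx => (hXY x hx y hy).symm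
  have hN (u : V) (hu : insert u (G.neighborSet u) ⊆ X ∪ Y) :
      u ∈ X ∧ G.neighborSet u = Y ∨ u ∈ Y ∧ G.neighborSet u = X := by
    have hNu := (Set.subset_insert u _).trans hu
    rcases hu (Set.mem_insert u _) with huX | huY
    · exact .inl ⟨huX, neighborSet_eq_of_neighborSet_subset_union hXY hX huX hNu⟩
    · exact .inr ⟨huY, neighborSet_eq_of_neighborSet_subset_union hYX hY huY
        (Set.union_comm X Y ▸ hNu)⟩
  have hinj : Set.InjOn (· ∈ X) {u | insert u (G.neighborSet u) ⊆ X ∪ Y} := by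
    intro u hu v hv (huv : (u ∈ X) = (v ∈ X))
    refine htf u v ?_
    rcases hN u hu with ⟨huX, hNu⟩ | ⟨huY, hNu⟩ <;>
      rcases hN v hv with ⟨hvX, hNv⟩ | ⟨hvY, hNv⟩
    · exact hNu.trans hNv.symm
    · exact (G.irrefl (hXY v (huv ▸ huX) v hvY)).elim
    · exact (G.irrefl (hXY u (huv ▸ hvX) u huY)).elim
    · exact hNu.trans hNv.symm
  calc {u | insert u (G.neighborSet u) ⊆ X ∪ Y}.ncard
      ≤ (Set.univ : Set Prop).ncard := Set.ncard_le_ncard_of_injOn _ (fun _ _ => trivial) hinj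
    _ = 2 := by simp

end SimpleGraph

/-- Every connected {K₃, false-twin}-free graph on n ≥ 4 vertices has at least
⌈n/2⌉ bicliques. -/
theorem bicliques_lower_bound_K3_free {V : Type*} [Fintype V] (G : SimpleGraph V)
    (hconn : G.Connected) (hn : 4 ≤ Fintype.card V)
    (hK3 : G.CliqueFree 3) (htf : FalseTwinFree G) :
    (Fintype.card V + 1) / 2 ≤ {B : Set V | IsBiclique G B}.ncard := by
  have : Nontrivial V := Fintype.one_lt_card_iff_nontrivial.mp (by omega)
  have hstar (v : V) : ∃ B, IsBiclique G B ∧ insert v (G.neighborSet v) ⊆ B :=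
    (G.isCompleteBipartiteSet_insert_neighborSet hK3
      (hconn.preconnected.exists_adj_of_nontrivial v)).exists_isBiclique_superset
  choose f hf hsub using hstar
  have hfiber : ∀ B ∈ {B | IsBiclique G B}, (f ⁻¹' {B}).ncard ≤ 2 := fun B hB =>
    (Set.ncard_le_ncard fun u (hu : f u = B) => hu ▸ hsub u).trans
      (G.ncard_insert_neighborSet_subset_le_two htf hB.1)
  have hcard := Nat.card_le_mul_ncard_of_mapsTo hf 2 hfiber
  rw [Nat.card_eq_fintype_card] at hcard
  omega
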